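/- Let X be a set, H ≥ 1 an integer, F a class of functions from X to [0, H+1], n ≥ 2 an integer, 0 < λ ≤ n, and let z_1, …, z_n be a sequence of elements of X with Z the corresponding multiset. Set A := ⌈log₂((H+1)²·n/λ)⌉ and, for each α ∈ {0, …, A−1}, ε_α := (H+1)·2^{−(α+1)/2}. For each α, let N_α be a positive integer and construct multisets Z^α_1, …, Z^α_{N_α} greedily: starting from empty multisets and processing i = 1, …, n in order, let j^α(z_i) be the least j ∈ [N_α] such that z_i is ε_α-independent (with respect to F) of the current contents of Z^α_j, and add z_i to Z^α_{j^α(z_i)}; if z_i is ε_α-dependent on the current contents of all of Z^α_1, …, Z^α_{N_α}, set j^α(z_i) := N_α + 1 and add z_i to no multiset. Define sens^est(z_i) := 1/n + ∑_{α=0}^{A−1} 2/j^α(z_i). Then sens^est(z_i) ≥ sensitivity_{Z,F,λ}(z_i) for every i ∈ [n]. -/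

import Mathlib

/-- The squared data norm `‖g‖_Z² = ∑_{z ∈ Z} g(z)²`, counting multiplicity. -/
noncomputable def msNormSq {X : Type*} (Z : Multiset X) (g : X → ℝ) : ℝ :=
  (Z.map fun x => g x ^ 2).sum

/-- The data norm `‖g‖_Z = (∑_{z ∈ Z} g(z)²)^{1/2}`. -/
noncomputable def msNorm {X : Type*} (Z : Multiset X) (g : X → ℝ) : ℝ :=
  Real.sqrt (msNormSq Z g)

/-- `z` is `ε`-dependent on the multiset `Z` with respect to the function class `F`. -/
def EpsDep {X : Type*} (F : Set (X → ℝ)) (ε : ℝ) (Z : Multiset X) (z : X) : Prop :=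
  ∀ f ∈ F, ∀ f' ∈ F, msNorm Z (fun x => f x - f' x) ≤ ε → |f z - f' z| ≤ ε

/-- The `λ`-sensitivity of `z` with respect to `Z` and `F` (0 if no admissible pair exists). -/
noncomputable def sensitivity {X : Type*} (F : Set (X → ℝ)) (lam : ℝ) (Z : Multiset X)
    (z : X) : ℝ :=
  sSup {r : ℝ | ∃ f ∈ F, ∃ f' ∈ F,
    lam ≤ msNormSq Z (fun x => f x - f' x) ∧
    r = (f z - f' z) ^ 2 / msNormSq Z (fun x => f x - f' x)}

/-- The contents of bin `Z^α_j` just before index `i` is processed: the multiset of all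
`z_m` with `1 ≤ m ≤ i − 1` which were assigned to bin `j` at level `α`. -/
def greedyBin {X : Type*} (z : ℕ → X) (jA : ℕ → ℕ → ℕ) (α j i : ℕ) : Multiset X :=
  ((Finset.Icc 1 (i - 1)).filter (fun m => jA α m = j)).val.map z

/-- The greedy assignment rule: for each level `α < A` and each index `i ∈ [1, n]`, either
`j^α(i)` is the least `j ∈ [1, N_α]` such that `z_i` is `ε_α`-independent of the current
contents of bin `j` (so `z_i` is `ε_α`-dependent on the contents of every earlier bin), or
`z_i` is `ε_α`-dependent on the contents of every bin and `j^α(i) = N_α + 1`. -/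
def GreedySpec {X : Type*} (F : Set (X → ℝ)) (z : ℕ → X) (n A : ℕ)
    (eps : ℕ → ℝ) (Nb : ℕ → ℕ) (jA : ℕ → ℕ → ℕ) : Prop :=
  ∀ α < A, ∀ i ∈ Finset.Icc 1 n,
    (jA α i ∈ Finset.Icc 1 (Nb α) ∧
      ¬ EpsDep F (eps α) (greedyBin z jA α (jA α i) i) (z i) ∧
      ∀ j ∈ Finset.Icc 1 (jA α i - 1), EpsDep F (eps α) (greedyBin z jA α j i) (z i)) ∨
    (jA α i = Nb α + 1 ∧
      ∀ j ∈ Finset.Icc 1 (Nb α), EpsDep F (eps α) (greedyBin z jA α j i) (z i))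

/-!
Fix `i` and a pair `f, f'` with `s := ‖f - f'‖²_Z ≥ λ`, and put `t := (f z_i - f' z_i)²`.
If `t ≤ s / n` the ratio `t / s` is at most `1 / n`. Otherwise `λ / n < t ≤ (H + 1)²`, and since
`2 ε_A² = (H + 1)² / 2^A ≤ λ / n`, `t` lies in a dyadic window `ε_α² < t ≤ 2 ε_α²` with `α < A`.
At that level `z_i` is `ε_α`-dependent on each of the bins `1, …, j^α(z_i) - 1`, which forces
`‖f - f'‖² > ε_α²` on each of them. These bins are disjoint and do not contain `z_i`, so
`s ≥ t + (j^α(z_i) - 1) ε_α²`, whence `t / s ≤ 2 / j^α(z_i)`.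
-/

open Finset

lemma msNormSq_map_finset {X : Type*} (s : Finset ℕ) (z : ℕ → X) (g : X → ℝ) :
    msNormSq (s.val.map z) g = ∑ m ∈ s, g (z m) ^ 2 := by
  simp only [msNormSq, Multiset.map_map]
  rfl

lemma EpsDep.sq_lt_msNormSq {X : Type*} {F : Set (X → ℝ)} {ε : ℝ} {Z : Multiset X} {z : X}
    (hdep : EpsDep F ε Z z) {f f' : X → ℝ} (hf : f ∈ F) (hf' : f' ∈ F) (hε : 0 ≤ ε)
    (hlt : ε ^ 2 < (f z - f' z) ^ 2) :
    ε ^ 2 < msNormSq Z (fun x => f x - f' x) := by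
  by_contra! hle
  have hnorm : msNorm Z (fun x => f x - f' x) ≤ ε :=
    (Real.sqrt_le_sqrt hle).trans_eq (Real.sqrt_sq hε)
  have hdiff := hdep f hf f' hf' hnorm
  exact hlt.not_ge (sq_le_sq.mpr (hdiff.trans (le_abs_self ε)))

lemma sq_add_sum_msNormSq_greedyBin_le {X : Type*} (z : ℕ → X) (jA : ℕ → ℕ → ℕ) (α : ℕ)
    (S : Finset ℕ) (g : X → ℝ) {n i : ℕ} (hi : i ∈ Icc 1 n) :
    g (z i) ^ 2 + ∑ j ∈ S, msNormSq (greedyBin z jA α j i) g ≤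
      msNormSq ((Icc 1 n).val.map z) g := by
  simp only [greedyBin, msNormSq_map_finset]
  rw [sum_fiberwise_eq_sum_filter, ← sum_insert (f := fun m => g (z m) ^ 2)
    fun hmem => by simp only [mem_filter, mem_Icc] at hmem hi; omega]
  refine sum_le_sum_of_subset_of_nonneg ?_ fun _ _ _ => sq_nonneg _
  intro m hm
  simp only [mem_insert, mem_filter, mem_Icc] at hm hi ⊢
  omega

lemma div_le_two_div_of_add_mul_le {t e s J : ℝ} (ht : 0 ≤ t) (hte : t ≤ 2 * e) (hJ : 1 ≤ J)
    (hs : 0 < s) (hsum : t + (J - 1) * e ≤ s) : t / s ≤ 2 / J := by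
  rw [div_le_div_iff₀ hs (by linarith)]
  nlinarith [mul_nonneg (sub_nonneg.mpr hJ) (sub_nonneg.mpr hte)]

namespace GreedySpec

variable {X : Type*} {F : Set (X → ℝ)} {z : ℕ → X} {n A : ℕ} {eps : ℕ → ℝ} {Nb : ℕ → ℕ}
  {jA : ℕ → ℕ → ℕ} {α i : ℕ}

lemma one_le_bin (h : GreedySpec F z n A eps Nb jA) (hα : α < A) (hi : i ∈ Icc 1 n) :
    1 ≤ jA α i := by
  rcases h α hα i hi with ⟨hmem, -, -⟩ | ⟨heq, -⟩
  · exact (mem_Icc.mp hmem).1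
  · omega

lemma epsDep_of_lt_bin (h : GreedySpec F z n A eps Nb jA) (hα : α < A) (hi : i ∈ Icc 1 n) :
    ∀ j ∈ Icc 1 (jA α i - 1), EpsDep F (eps α) (greedyBin z jA α j i) (z i) := by
  rcases h α hα i hi with ⟨-, -, hdep⟩ | ⟨heq, hdep⟩
  · exact hdep
  · simpa [heq] using hdep

lemma sq_div_msNormSq_le (h : GreedySpec F z n A eps Nb jA) (hα : α < A) (hi : i ∈ Icc 1 n)
    (heps : 0 ≤ eps α) {f f' : X → ℝ} (hf : f ∈ F) (hf' : f' ∈ F)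
    (hs : 0 < msNormSq ((Icc 1 n).val.map z) (fun x => f x - f' x))
    (hlow : eps α ^ 2 < (f (z i) - f' (z i)) ^ 2)
    (hup : (f (z i) - f' (z i)) ^ 2 ≤ 2 * eps α ^ 2) :
    (f (z i) - f' (z i)) ^ 2 / msNormSq ((Icc 1 n).val.map z) (fun x => f x - f' x) ≤
      2 / (jA α i : ℝ) := by
  have hJ := h.one_le_bin hα hi
  refine div_le_two_div_of_add_mul_le (sq_nonneg _) hup (by exact_mod_cast hJ) hs ?_
  have hbins : #(Icc 1 (jA α i - 1)) • eps α ^ 2 ≤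
      ∑ j ∈ Icc 1 (jA α i - 1), msNormSq (greedyBin z jA α j i) (fun x => f x - f' x) :=
    card_nsmul_le_sum _ _ _ fun j hj =>
      ((h.epsDep_of_lt_bin hα hi j hj).sq_lt_msNormSq hf hf' heps hlow).le
  rw [Nat.card_Icc, Nat.add_sub_cancel, nsmul_eq_mul, Nat.cast_sub hJ, Nat.cast_one] at hbins
  linarith [sq_add_sum_msNormSq_greedyBin_le z jA α (Icc 1 (jA α i - 1)) (fun x => f x - f' x) hi]

end GreedySpec

lemma le_pow_natCeil_logb {b x : ℝ} (hb : 1 < b) (hx : 0 < x) : x ≤ b ^ ⌈Real.logb b x⌉₊ := by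
  rw [← Real.rpow_natCast]
  exact (Real.logb_le_iff_le_rpow hb hx).mp (Nat.le_ceil _)

lemma exists_dyadic_level_lt_natCeil_logb {c μ t : ℝ} (hμ : 0 < μ) (hμt : μ < t) (htc : t ≤ c) :
    ∃ α < ⌈Real.logb 2 (c / μ)⌉₊, c / 2 ^ (α + 1) < t ∧ t ≤ 2 * (c / 2 ^ (α + 1)) := by
  have ht : 0 < t := hμ.trans hμt
  have hc : 0 < c := ht.trans_le htc
  obtain ⟨α, hlo, hhi⟩ := exists_nat_pow_near ((one_le_div ht).mpr htc) one_lt_two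
  refine ⟨α, ?_, ?_, ?_⟩
  · by_contra! hAα
    have hcμ : c / μ ≤ c / t :=
      (le_pow_natCeil_logb one_lt_two (div_pos hc hμ)).trans
        ((pow_le_pow_right₀ one_le_two hAα).trans hlo)
    exact (div_lt_div_of_pos_left hc hμ hμt).not_ge hcμ
  · rwa [div_lt_iff₀ (by positivity), mul_comm, ← div_lt_iff₀ ht]
  · rwa [pow_succ, ← div_div, mul_div_cancel₀ _ two_ne_zero, le_div_iff₀ (by positivity),
      mul_comm, ← le_div_iff₀ ht]

lemma mul_two_rpow_neg_half_sq (a : ℝ) (α : ℕ) :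
    (a * (2 : ℝ) ^ (-(((α : ℝ) + 1) / 2))) ^ 2 = a ^ 2 / 2 ^ (α + 1) := by
  have hexp : -(((α : ℝ) + 1) / 2) * (2 : ℕ) = -((α + 1 : ℕ) : ℝ) := by push_cast; ring
  rw [mul_pow, ← Real.rpow_natCast (2 ^ _) 2, ← Real.rpow_mul zero_le_two, hexp,
    Real.rpow_neg zero_le_two, Real.rpow_natCast, div_eq_mul_inv]

theorem sensitivity_estimate_is_upper_bound_general {X : Type*} (H : ℕ)
    (F : Set (X → ℝ)) (hF : ∀ f ∈ F, ∀ x, f x ∈ Set.Icc (0 : ℝ) (H + 1))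
    (n : ℕ)
    (lam : ℝ) (hlam0 : 0 < lam)
    (z : ℕ → X)
    (Nb : ℕ → ℕ)
    (jA : ℕ → ℕ → ℕ)
    (hgreedy : GreedySpec F z n ⌈Real.logb 2 (((H : ℝ) + 1) ^ 2 * n / lam)⌉₊
      (fun α => ((H : ℝ) + 1) * (2 : ℝ) ^ (-(((α : ℝ) + 1) / 2))) Nb jA) :
    ∀ i ∈ Finset.Icc 1 n,
      sensitivity F lam ((Finset.Icc 1 n).val.map z) (z i) ≤
        1 / (n : ℝ) +
          ∑ α ∈ Finset.range ⌈Real.logb 2 (((H : ℝ) + 1) ^ 2 * n / lam)⌉₊,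
            2 / (jA α i : ℝ) := by
  intro i hi
  set A := ⌈Real.logb 2 (((H : ℝ) + 1) ^ 2 * n / lam)⌉₊
  have hn : (0 : ℝ) < n := Nat.cast_pos.mpr (by simp only [mem_Icc] at hi; omega)
  have hterm : ∀ α, 0 ≤ 2 / (jA α i : ℝ) := fun _ => by positivity
  have hsum : 0 ≤ ∑ α ∈ range A, 2 / (jA α i : ℝ) := sum_nonneg fun α _ => hterm α
  refine Real.sSup_le ?_ (by positivity)
  rintro _ ⟨f, hf, f', hf', hlam, rfl⟩
  set s := msNormSq ((Icc 1 n).val.map z) (fun x => f x - f' x)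
  set t := (f (z i) - f' (z i)) ^ 2
  have hs : 0 < s := hlam0.trans_le hlam
  rcases le_or_gt t (s / n) with hsmall | hlarge
  · have hratio : t / s ≤ 1 / n := by
      rw [div_le_div_iff₀ hs hn, one_mul]
      exact (le_div_iff₀ hn).mp hsmall
    linarith
  · have htc : t ≤ ((H : ℝ) + 1) ^ 2 := by
      obtain ⟨hf0, hfH⟩ := hF f hf (z i)
      obtain ⟨hf'0, hf'H⟩ := hF f' hf' (z i)
      exact sq_le_sq' (by linarith) (by linarith)
    obtain ⟨α, hαA, hlow, hup⟩ := exists_dyadic_level_lt_natCeil_logb (div_pos hlam0 hn)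
      ((div_le_div_of_nonneg_right hlam hn.le).trans_lt hlarge) htc
    rw [div_div_eq_mul_div] at hαA
    rw [← mul_two_rpow_neg_half_sq] at hlow hup
    calc t / s ≤ 2 / (jA α i : ℝ) :=
          hgreedy.sq_div_msNormSq_le hαA hi (by positivity) hf hf' hs hlow hup
      _ ≤ ∑ α ∈ range A, 2 / (jA α i : ℝ) :=
          single_le_sum (fun α _ => hterm α) (mem_range.mpr hαA)
      _ ≤ _ := le_add_of_nonneg_left (by positivity)

/-- correctness of Algorithm 4 of the paper: the greedily computed estimate
`sens^est(z_i) = 1/n + ∑_{α<A} 2/j^α(i)` is an upper bound on the true `λ`-sensitivity. -/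
theorem sensitivity_estimate_is_upper_bound {X : Type*} (H : ℕ) (hH : 1 ≤ H)
    (F : Set (X → ℝ)) (hF : ∀ f ∈ F, ∀ x, f x ∈ Set.Icc (0 : ℝ) (H + 1))
    (n : ℕ) (hn : 2 ≤ n)
    (lam : ℝ) (hlam0 : 0 < lam) (hlam1 : lam ≤ (n : ℝ))
    (z : ℕ → X)
    (Nb : ℕ → ℕ)
    (hNb : ∀ α < ⌈Real.logb 2 (((H : ℝ) + 1) ^ 2 * n / lam)⌉₊, 1 ≤ Nb α)
    (jA : ℕ → ℕ → ℕ)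
    (hgreedy : GreedySpec F z n ⌈Real.logb 2 (((H : ℝ) + 1) ^ 2 * n / lam)⌉₊
      (fun α => ((H : ℝ) + 1) * (2 : ℝ) ^ (-(((α : ℝ) + 1) / 2))) Nb jA) :
    ∀ i ∈ Finset.Icc 1 n,
      sensitivity F lam ((Finset.Icc 1 n).val.map z) (z i) ≤
        1 / (n : ℝ) +
          ∑ α ∈ Finset.range ⌈Real.logb 2 (((H : ℝ) + 1) ^ 2 * n / lam)⌉₊,
            2 / (jA α i : ℝ) :=
  sensitivity_estimate_is_upper_bound_general H F hF n lam hlam0 z Nb jA hgreedy
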